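/- arXiv:0903.2621 — 2 statements merged into one kernel-verified Lean document; each statement's English description precedes it below -/
import Mathlib

section
/- Let a : {0,...,l} → ℝ and b : {0,...,m} → ℝ be positive log-concave sequences and define d : {0,...,l+m} → ℝ by d(p) = max over j with max(0, p-m) ≤ j ≤ min(p, l) of a(j)·b(p-j). If the consecutive values of d are pairwise distinct (d(p) ≠ d(p+1) for all p), then the consecutive values of a are pairwise distinct and the consecutive values of b are pairwise distinct. -/
/-- A positive log-concave sequence with two equal consecutive values attains its
maximum at those values. -/
lemma keymax (n : ℕ) (a : ℕ → ℝ) (hpos : ∀ j, j ≤ n → 0 < a j)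
    (hlc : ∀ j, j + 2 ≤ n → a j * a (j + 2) ≤ a (j + 1) ^ 2)
    (i : ℕ) (hi : i + 1 ≤ n) (heq : a i = a (i + 1)) :
    ∀ j, j ≤ n → a j ≤ a i := by
  have hL : ∀ k, k ≤ i → a (i - k) ≤ a (i - k + 1) := by
    intro k
    induction k with
    | zero => intro _; simpa using heq.le
    | succ k ih =>
      intro hk
      have ih' := ih (by omega)
      have e1 : a (i - k) = a (i - (k + 1) + 1) := by
        rw [show i - k = i - (k + 1) + 1 by omega]
      have e2 : a (i - k + 1) = a (i - (k + 1) + 2) := by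
        rw [show i - k + 1 = i - (k + 1) + 2 by omega]
      rw [e1, e2] at ih'
      have hlcj := hlc (i - (k + 1)) (by omega)
      have p0 := hpos (i - (k + 1)) (by omega)
      have p1 := hpos (i - (k + 1) + 1) (by omega)
      have p2 := hpos (i - (k + 1) + 2) (by omega)
      nlinarith
  have hLchain : ∀ k, k ≤ i → a (i - k) ≤ a i := by
    intro k
    induction k with
    | zero => intro _; simp
    | succ k ih =>
      intro hk
      have h := hL (k + 1) hk
      have h1 : i - (k + 1) + 1 = i - k := by omega
      rw [h1] at h
      exact h.trans (ih (by omega))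
  have hR : ∀ k, i + k + 1 ≤ n → a (i + k + 1) ≤ a (i + k) := by
    intro k
    induction k with
    | zero => intro _; simpa using heq.ge
    | succ k ih =>
      intro hk
      have ih' := ih (by omega)
      have hlcj := hlc (i + k) (by omega)
      have p0 := hpos (i + k) (by omega)
      have p1 := hpos (i + k + 1) (by omega)
      have p2 := hpos (i + k + 2) (by omega)
      have e1 : i + (k + 1) + 1 = (i + k) + 2 := by omega
      have e2 : i + (k + 1) = (i + k) + 1 := by omega
      rw [e1, e2]
      nlinarith
  have hRchain : ∀ k, i + k ≤ n → a (i + k) ≤ a i := by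
    intro k
    induction k with
    | zero => intro _; simp
    | succ k ih =>
      intro hk
      have h := hR k (by omega)
      have e : i + (k + 1) = i + k + 1 := by omega
      rw [e]
      exact h.trans (ih (by omega))
  intro j hj
  rcases le_or_gt j i with h | h
  · have := hLchain (i - j) (by omega)
    rwa [Nat.sub_sub_self h] at this
  · have := hRchain (j - i) (by omega)
    rwa [Nat.add_sub_cancel' h.le] at this

/-- Workhorse: under the hypotheses of `stmt4`, consecutive values of `a` are distinct. -/
lemma aux4 (l m : ℕ) (a : Fin (l + 1) → ℝ) (b : Fin (m + 1) → ℝ)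
    (d : Fin (l + m + 1) → ℝ)
    (hapos : ∀ j, 0 < a j) (hbpos : ∀ q, 0 < b q)
    (halc : ∀ i j r : Fin (l + 1), (i : ℕ) + 1 = (j : ℕ) → (j : ℕ) + 1 = (r : ℕ) →
      a i * a r ≤ (a j) ^ 2)
    (hd : ∀ p : Fin (l + m + 1),
      IsGreatest {x : ℝ | ∃ j : Fin (l + 1), ∃ q : Fin (m + 1),
        (j : ℕ) + (q : ℕ) = (p : ℕ) ∧ x = a j * b q} (d p))
    (hdist : ∀ i j : Fin (l + m + 1), (i : ℕ) + 1 = (j : ℕ) → d i ≠ d j) :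
    ∀ i j : Fin (l + 1), (i : ℕ) + 1 = (j : ℕ) → a i ≠ a j := by
  intro i j hij heq
  -- extend a to ℕ
  set A : ℕ → ℝ := fun n => if h : n ≤ l then a ⟨n, by omega⟩ else 1 with hA
  have hAval : ∀ (n : ℕ) (h : n ≤ l), A n = a ⟨n, by omega⟩ := by
    intro n h; simp [hA, h]
  have hil : (i : ℕ) + 1 ≤ l := by omega
  have hApos : ∀ n, n ≤ l → 0 < A n := by
    intro n h; rw [hAval n h]; exact hapos _
  have hAlc : ∀ n, n + 2 ≤ l → A n * A (n + 2) ≤ A (n + 1) ^ 2 := by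
    intro n h
    rw [hAval n (by omega), hAval (n + 2) (by omega), hAval (n + 1) (by omega)]
    exact halc ⟨n, by omega⟩ ⟨n + 1, by omega⟩ ⟨n + 2, by omega⟩ rfl rfl
  have hAeq : A i = A ((i : ℕ) + 1) := by
    rw [hAval i (by omega), hAval ((i : ℕ) + 1) (by omega)]
    have : (⟨(i : ℕ), by omega⟩ : Fin (l + 1)) = i := by ext; rfl
    rw [this]
    have hj : (⟨(i : ℕ) + 1, by omega⟩ : Fin (l + 1)) = j := by ext; simp [hij]
    rw [hj]; exact heq
  have hamax : ∀ j' : Fin (l + 1), a j' ≤ a i := by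
    intro j'
    have := keymax l A hApos hAlc i hil hAeq j' (by omega)
    rwa [hAval j' (by omega), hAval i (by omega), Fin.eta, Fin.eta] at this
  -- maximizer of b
  obtain ⟨q0, -, hq0⟩ := Finset.exists_max_image (Finset.univ : Finset (Fin (m + 1))) b
    ⟨0, Finset.mem_univ 0⟩
  have hbmax : ∀ q : Fin (m + 1), b q ≤ b q0 := fun q => hq0 q (Finset.mem_univ q)
  set p : Fin (l + m + 1) := ⟨(i : ℕ) + (q0 : ℕ), by omega⟩ with hp
  set p' : Fin (l + m + 1) := ⟨(i : ℕ) + 1 + (q0 : ℕ), by omega⟩ with hp'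
  have hub : ∀ x ∈ {x : ℝ | ∃ j : Fin (l + 1), ∃ q : Fin (m + 1),
      (j : ℕ) + (q : ℕ) = (p : ℕ) ∧ x = a j * b q} ∪ {x : ℝ | ∃ j : Fin (l + 1),
      ∃ q : Fin (m + 1), (j : ℕ) + (q : ℕ) = (p' : ℕ) ∧ x = a j * b q},
      x ≤ a i * b q0 := by
    rintro x (⟨j', q', -, rfl⟩ | ⟨j', q', -, rfl⟩) <;>
      exact mul_le_mul (hamax j') (hbmax q') (hbpos q').le (hapos i).le
  have hdp : d p = a i * b q0 := by
    refine le_antisymm ?_ ?_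
    · obtain ⟨j', q', hsum, hx⟩ := (hd p).1
      rw [hx]
      exact hub _ (Or.inl ⟨j', q', hsum, rfl⟩)
    · exact (hd p).2 ⟨i, q0, rfl, rfl⟩
  have hdp' : d p' = a i * b q0 := by
    refine le_antisymm ?_ ?_
    · obtain ⟨j', q', hsum, hx⟩ := (hd p').1
      rw [hx]
      exact hub _ (Or.inr ⟨j', q', hsum, rfl⟩)
    · have hmem : a j * b q0 ≤ d p' := (hd p').2
        ⟨j, q0, by show (j : ℕ) + (q0 : ℕ) = (i : ℕ) + 1 + (q0 : ℕ); omega, rfl⟩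
      rwa [← heq] at hmem
  exact hdist p p' (by show (i : ℕ) + (q0 : ℕ) + 1 = (i : ℕ) + 1 + (q0 : ℕ); omega) (hdp.trans hdp'.symm)

/-- If the max-convolution `d` of two positive log-concave sequences `a`, `b` has
pairwise distinct consecutive values, then so do `a` and `b`. -/
theorem stmt4 (l m : ℕ) (a : Fin (l + 1) → ℝ) (b : Fin (m + 1) → ℝ)
    (d : Fin (l + m + 1) → ℝ)
    (hapos : ∀ j, 0 < a j) (hbpos : ∀ q, 0 < b q)
    (halc : ∀ i j r : Fin (l + 1), (i : ℕ) + 1 = (j : ℕ) → (j : ℕ) + 1 = (r : ℕ) →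
      a i * a r ≤ (a j) ^ 2)
    (hblc : ∀ i j r : Fin (m + 1), (i : ℕ) + 1 = (j : ℕ) → (j : ℕ) + 1 = (r : ℕ) →
      b i * b r ≤ (b j) ^ 2)
    (hd : ∀ p : Fin (l + m + 1),
      IsGreatest {x : ℝ | ∃ j : Fin (l + 1), ∃ q : Fin (m + 1),
        (j : ℕ) + (q : ℕ) = (p : ℕ) ∧ x = a j * b q} (d p))
    (hdist : ∀ i j : Fin (l + m + 1), (i : ℕ) + 1 = (j : ℕ) → d i ≠ d j) :
    (∀ i j : Fin (l + 1), (i : ℕ) + 1 = (j : ℕ) → a i ≠ a j) ∧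
    (∀ i j : Fin (m + 1), (i : ℕ) + 1 = (j : ℕ) → b i ≠ b j) := by
  constructor
  · exact aux4 l m a b d hapos hbpos halc hd hdist
  · -- swap the roles of a and b
    set d' : Fin (m + l + 1) → ℝ := fun p => d ⟨(p : ℕ), by omega⟩ with hd'def
    have hd' : ∀ p : Fin (m + l + 1),
        IsGreatest {x : ℝ | ∃ q : Fin (m + 1), ∃ j : Fin (l + 1),
          (q : ℕ) + (j : ℕ) = (p : ℕ) ∧ x = b q * a j} (d' p) := by
      intro p
      have h := hd ⟨(p : ℕ), by omega⟩
      constructor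
      · obtain ⟨j', q', hsum, hx⟩ := h.1
        exact ⟨q', j', by simpa [Nat.add_comm] using hsum,
          hx.trans (mul_comm (a j') (b q'))⟩
      · rintro x ⟨q', j', hsum, rfl⟩
        have h2 : a j' * b q' ≤ d ⟨(p : ℕ), by omega⟩ :=
          h.2 ⟨j', q', by simpa [Nat.add_comm] using hsum, rfl⟩
        exact (mul_comm (b q') (a j')).trans_le h2
    have hdist' : ∀ i j : Fin (m + l + 1), (i : ℕ) + 1 = (j : ℕ) → d' i ≠ d' j := by
      intro i j hij
      exact hdist ⟨(i : ℕ), by omega⟩ ⟨(j : ℕ), by omega⟩ hij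
    exact aux4 m l b a d' hbpos hapos hblc hd' hdist'
end

section
/- Let a : {0,...,l} → ℝ and b : {0,...,m} → ℝ be positive log-concave sequences. Then the sequence d : {0,...,l+m} → ℝ defined by d(p) = max over j with max(0, p-m) ≤ j ≤ min(p, l) of a(j)·b(p-j) is log-concave. -/
/-!
Let `d(p-1) = a(j₁) b(q₁)` and `d(p+1) = a(j₂) b(q₂)` be maximising pairs, so that
`j₁ + q₁ + 2 = j₂ + q₂`. Then `j₁ < j₂` or `q₁ < q₂`; say the former. Log-concavity of `a` lets
the `a`-indices move inwards, `a(j₁) a(j₂) ≤ a(j₁+1) a(j₂-1)`, and both `a(j₁+1) b(q₁)` and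
`a(j₂-1) b(q₂)` are candidates for `d(p)`, whence `d(p-1) d(p+1) ≤ d(p)²`.
-/

def IsLogConcaveSeq {n : ℕ} (f : Fin n → ℝ) : Prop :=
  ∀ i j r : Fin n, (i : ℕ) + 1 = (j : ℕ) → (j : ℕ) + 1 = (r : ℕ) → f i * f r ≤ f j ^ 2

namespace IsLogConcaveSeq

variable {n : ℕ} {f : Fin n → ℝ}

theorem mul_le_mul_shift_inward (hf : IsLogConcaveSeq f) (hpos : ∀ k, 0 < f k)
    {i i' j' j : Fin n} (hi : (i : ℕ) + 1 = i') (hj : (j' : ℕ) + 1 = j) (hij : i < j) :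
    f i * f j ≤ f i' * f j' := by
  obtain ⟨k, hk⟩ : ∃ k, (j' : ℕ) = i + k := ⟨j' - i, by omega⟩
  induction k generalizing j' j with
  | zero =>
    obtain rfl : j' = i := Fin.ext (by omega)
    obtain rfl : j = i' := Fin.ext (by omega)
    exact (mul_comm _ _).le
  | succ k ih =>
    set j'' : Fin n := ⟨i + k, by omega⟩
    have hprev : f i * f j' ≤ f i' * f j'' :=
      ih (by simp [j'']; omega) (Fin.lt_def.2 (by omega)) rfl
    have hlc : f j'' * f j ≤ f j' ^ 2 := hf j'' j' j (by simp [j'']; omega) hj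
    refine le_of_mul_le_mul_right ?_ (hpos j')
    calc f i * f j * f j' = f i * f j' * f j := by ring
      _ ≤ f i' * f j'' * f j := mul_le_mul_of_nonneg_right hprev (hpos j).le
      _ = f i' * (f j'' * f j) := by ring
      _ ≤ f i' * f j' ^ 2 := mul_le_mul_of_nonneg_left hlc (hpos i').le
      _ = f i' * f j' * f j' := by ring

end IsLogConcaveSeq

theorem mul_mul_le_sq_of_exchange {n k : ℕ} {a : Fin n → ℝ} {b : Fin k → ℝ}
    (ha : IsLogConcaveSeq a) (hapos : ∀ j, 0 < a j) (hbpos : ∀ q, 0 < b q) {p : ℕ} {D : ℝ}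
    (hD : ∀ (j : Fin n) (q : Fin k), (j : ℕ) + (q : ℕ) = p → a j * b q ≤ D)
    {j₁ j₂ : Fin n} {q₁ q₂ : Fin k} (h₁ : (j₁ : ℕ) + q₁ + 1 = p)
    (h₂ : (j₂ : ℕ) + q₂ = p + 1) (hj : j₁ < j₂) :
    a j₁ * b q₁ * (a j₂ * b q₂) ≤ D ^ 2 := by
  have hj' := Fin.lt_def.1 hj
  set j₁' : Fin n := ⟨j₁ + 1, by omega⟩
  set j₂' : Fin n := ⟨j₂ - 1, by omega⟩
  have hcross : a j₁ * a j₂ ≤ a j₁' * a j₂' :=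
    ha.mul_le_mul_shift_inward hapos rfl (by simp [j₂']; omega) hj
  have hD₁ : a j₁' * b q₁ ≤ D := hD _ _ (by simp [j₁']; omega)
  have hD₂ : a j₂' * b q₂ ≤ D := hD _ _ (by simp [j₂']; omega)
  have hpos₁ : 0 ≤ a j₁' * b q₁ := (mul_pos (hapos _) (hbpos _)).le
  have hpos₂ : 0 ≤ a j₂' * b q₂ := (mul_pos (hapos _) (hbpos _)).le
  calc a j₁ * b q₁ * (a j₂ * b q₂) = a j₁ * a j₂ * (b q₁ * b q₂) := by ring
    _ ≤ a j₁' * a j₂' * (b q₁ * b q₂) :=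
      mul_le_mul_of_nonneg_right hcross (mul_pos (hbpos _) (hbpos _)).le
    _ = (a j₁' * b q₁) * (a j₂' * b q₂) := by ring
    _ ≤ D * D := mul_le_mul hD₁ hD₂ hpos₂ (hpos₁.trans hD₁)
    _ = D ^ 2 := by ring

/-- The max-convolution of two positive log-concave sequences is log-concave. -/
theorem stmt6 (l m : ℕ) (a : Fin (l + 1) → ℝ) (b : Fin (m + 1) → ℝ)
    (d : Fin (l + m + 1) → ℝ)
    (hapos : ∀ j, 0 < a j) (hbpos : ∀ q, 0 < b q)
    (halc : ∀ i j r : Fin (l + 1), (i : ℕ) + 1 = (j : ℕ) → (j : ℕ) + 1 = (r : ℕ) →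
      a i * a r ≤ (a j) ^ 2)
    (hblc : ∀ i j r : Fin (m + 1), (i : ℕ) + 1 = (j : ℕ) → (j : ℕ) + 1 = (r : ℕ) →
      b i * b r ≤ (b j) ^ 2)
    (hd : ∀ p : Fin (l + m + 1),
      IsGreatest {x : ℝ | ∃ j : Fin (l + 1), ∃ q : Fin (m + 1),
        (j : ℕ) + (q : ℕ) = (p : ℕ) ∧ x = a j * b q} (d p)) :
    ∀ i j r : Fin (l + m + 1), (i : ℕ) + 1 = (j : ℕ) → (j : ℕ) + 1 = (r : ℕ) →
      d i * d r ≤ (d j) ^ 2 := by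
  intro i p r hip hpr
  obtain ⟨⟨j₁, q₁, h₁, he₁⟩, -⟩ := hd i
  obtain ⟨⟨j₂, q₂, h₂, he₂⟩, -⟩ := hd r
  have hD : ∀ (j : Fin (l + 1)) (q : Fin (m + 1)), (j : ℕ) + (q : ℕ) = p → a j * b q ≤ d p :=
    fun j q h => (hd p).2 ⟨j, q, h, rfl⟩
  rw [he₁, he₂]
  rcases lt_or_ge j₁ j₂ with hj | hj
  · exact mul_mul_le_sq_of_exchange halc hapos hbpos hD (by omega) (by omega) hj
  · have hq : q₁ < q₂ := Fin.lt_def.2 (by have := Fin.le_def.1 hj; omega)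
    have hD' : ∀ (q : Fin (m + 1)) (j : Fin (l + 1)), (q : ℕ) + (j : ℕ) = p → b q * a j ≤ d p :=
      fun q j h => (mul_comm _ _).le.trans (hD j q (by omega))
    calc a j₁ * b q₁ * (a j₂ * b q₂) = b q₁ * a j₁ * (b q₂ * a j₂) := by ring
      _ ≤ d p ^ 2 :=
        mul_mul_le_sq_of_exchange hblc hbpos hapos hD' (by omega) (by omega) hq
end
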